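/- Let Γ be a connection on the trivial biextension T₁ × T₂ × T₃ of (T₁, T₂) by T₃ (T₁, T₂, T₃ complex vector spaces), given by a field of forms Γ_{t₁,t₂}(t₁′ + t₂′). Then Γ is compatible with the two partial group laws of the biextension (i.e. defines a ♮-structure) if and only if Γ_{t₁,t₂}(t₁′ + t₂′) = γ₁(t₁, t₂′) + γ₂(t₁′, t₂) for some bilinear maps γ₁, γ₂ : appropriate factors → T₃; and in that case the curvature R of Γ is R(t₁′+t₂′, t₁″+t₂″) = (γ₁ − γ₂)(t₁′, t₂″) − (γ₁ − γ₂)(t₁″, t₂′), i.e. the associated pairing Υ : T₁ ⊗ T₂ → T₃ equals γ₁ − γ₂. -/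

import Mathlib

/-!
Special cases of the horizontality of `+₁` show that `Γ_{t₁,t₂}(v₁, 0)`
does not depend on `t₁` and that `Γ_{t₁,t₂}(0, v₂)` is additive in `t₁`; symmetrically for `+₂`.
Splitting `(v₁, v₂) = (v₁, 0) + (0, v₂)` then gives
`Γ_{t₁,t₂}(v₁, v₂) = Γ_{t₁,0}(0, v₂) + Γ_{0,t₂}(v₁, 0)`, i.e. the split form with
`γ₁(t₁) = Γ_{t₁,0}|_{T₂}` and `γ₂(t₂) = Γ_{0,t₂}|_{T₁}`. The curvature formula is a substitution.
-/

namespace TrivialBiextension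

variable {R M₁ M₂ M₃ : Type*} [Semiring R] [AddCommMonoid M₁] [Module R M₁]
  [AddCommMonoid M₂] [Module R M₂] [AddCommMonoid M₃] [Module R M₃]

/-- Translation by the partial group law `+₁` of `M₁ × M₂ × M₃` is horizontal for `Γ`
(`IsHorizontalSnd`: the same for `+₂`). -/
def IsHorizontalFst (Γ : M₁ → M₂ → (M₁ × M₂ →ₗ[R] M₃)) : Prop :=
  ∀ t₁ s₁ t₂ v₁ w₁ v₂, Γ (t₁ + s₁) t₂ (v₁ + w₁, v₂) = Γ t₁ t₂ (v₁, v₂) + Γ s₁ t₂ (w₁, v₂)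

def IsHorizontalSnd (Γ : M₁ → M₂ → (M₁ × M₂ →ₗ[R] M₃)) : Prop :=
  ∀ t₁ t₂ s₂ v₁ v₂ w₂, Γ t₁ (t₂ + s₂) (v₁, v₂ + w₂) = Γ t₁ t₂ (v₁, v₂) + Γ t₁ s₂ (v₁, w₂)

variable {Γ : M₁ → M₂ → (M₁ × M₂ →ₗ[R] M₃)}

theorem IsHorizontalFst.apply_inl_eq (h : IsHorizontalFst Γ) (t₁ : M₁) (t₂ : M₂) (v₁ : M₁) :
    Γ t₁ t₂ (v₁, 0) = Γ 0 t₂ (v₁, 0) := by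
  simpa [Prod.mk_zero_zero] using h t₁ 0 t₂ 0 v₁ 0

theorem IsHorizontalFst.apply_inr_add (h : IsHorizontalFst Γ) (a b : M₁) (t₂ v₂ : M₂) :
    Γ (a + b) t₂ (0, v₂) = Γ a t₂ (0, v₂) + Γ b t₂ (0, v₂) := by
  simpa using h a b t₂ 0 0 v₂

theorem IsHorizontalSnd.apply_inr_eq (h : IsHorizontalSnd Γ) (t₁ : M₁) (t₂ v₂ : M₂) :
    Γ t₁ t₂ (0, v₂) = Γ t₁ 0 (0, v₂) := by
  simpa [Prod.mk_zero_zero] using h t₁ t₂ 0 0 0 v₂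

theorem IsHorizontalSnd.apply_inl_add (h : IsHorizontalSnd Γ) (t₁ : M₁) (a b : M₂) (v₁ : M₁) :
    Γ t₁ (a + b) (v₁, 0) = Γ t₁ a (v₁, 0) + Γ t₁ b (v₁, 0) := by
  simpa using h t₁ a b v₁ 0 0

theorem apply_eq_of_isHorizontal (h₁ : IsHorizontalFst Γ) (h₂ : IsHorizontalSnd Γ)
    (t₁ : M₁) (t₂ : M₂) (v₁ : M₁) (v₂ : M₂) :
    Γ t₁ t₂ (v₁, v₂) = Γ t₁ 0 (0, v₂) + Γ 0 t₂ (v₁, 0) := by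
  calc Γ t₁ t₂ (v₁, v₂) = Γ t₁ t₂ (v₁, 0) + Γ t₁ t₂ (0, v₂) := by
        rw [← map_add, Prod.mk_add_mk, add_zero, zero_add]
    _ = Γ t₁ 0 (0, v₂) + Γ 0 t₂ (v₁, 0) := by
        rw [h₁.apply_inl_eq, h₂.apply_inr_eq, add_comm]

theorem exists_split_of_isHorizontal (h₁ : IsHorizontalFst Γ) (h₂ : IsHorizontalSnd Γ) :
    ∃ (γ₁ : M₁ → (M₂ →ₗ[R] M₃)) (γ₂ : M₂ → (M₁ →ₗ[R] M₃)),
      (∀ a b : M₁, γ₁ (a + b) = γ₁ a + γ₁ b) ∧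
      (∀ a b : M₂, γ₂ (a + b) = γ₂ a + γ₂ b) ∧
      (∀ t₁ t₂ v₁ v₂, Γ t₁ t₂ (v₁, v₂) = γ₁ t₁ v₂ + γ₂ t₂ v₁) :=
  ⟨fun t₁ => (Γ t₁ 0).comp (LinearMap.inr R M₁ M₂),
    fun t₂ => (Γ 0 t₂).comp (LinearMap.inl R M₁ M₂),
    fun a b => LinearMap.ext fun v₂ => h₁.apply_inr_add a b 0 v₂,
    fun a b => LinearMap.ext fun v₁ => h₂.apply_inl_add 0 a b v₁,
    apply_eq_of_isHorizontal h₁ h₂⟩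

variable {γ₁ : M₁ → (M₂ →ₗ[R] M₃)} {γ₂ : M₂ → (M₁ →ₗ[R] M₃)}

theorem isHorizontalFst_of_split (hγ₁ : ∀ a b : M₁, γ₁ (a + b) = γ₁ a + γ₁ b)
    (hΓ : ∀ t₁ t₂ v₁ v₂, Γ t₁ t₂ (v₁, v₂) = γ₁ t₁ v₂ + γ₂ t₂ v₁) : IsHorizontalFst Γ := by
  intro t₁ s₁ t₂ v₁ w₁ v₂
  simp only [hΓ, hγ₁, LinearMap.add_apply, map_add]
  abel

theorem isHorizontalSnd_of_split (hγ₂ : ∀ a b : M₂, γ₂ (a + b) = γ₂ a + γ₂ b)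
    (hΓ : ∀ t₁ t₂ v₁ v₂, Γ t₁ t₂ (v₁, v₂) = γ₁ t₁ v₂ + γ₂ t₂ v₁) : IsHorizontalSnd Γ := by
  intro t₁ t₂ s₂ v₁ v₂ w₂
  simp only [hΓ, hγ₂, LinearMap.add_apply, map_add]
  abel

end TrivialBiextension

open TrivialBiextension in
/-- Let `T₁, T₂, T₃` be complex vector spaces and let `Γ` be a connection
on the trivial biextension `T₁ × T₂ × T₃` of `(T₁, T₂)` by `T₃`: a field assigning to
each base point `(t₁, t₂)` a `T₃`-valued linear form `Γ_{t₁,t₂}(t₁′ + t₂′)` on tangent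
vectors.  Compatibility with the two partial group laws (horizontality of the structure
maps, i.e. a `♮`-structure) means
`Γ_{t₁+s₁,t₂}(v₁+w₁, v₂) = Γ_{t₁,t₂}(v₁, v₂) + Γ_{s₁,t₂}(w₁, v₂)` and
`Γ_{t₁,t₂+s₂}(v₁, v₂+w₂) = Γ_{t₁,t₂}(v₁, v₂) + Γ_{t₁,s₂}(v₁, w₂)`.
Then `Γ` defines a `♮`-structure iff `Γ_{t₁,t₂}(t₁′ + t₂′) = γ₁(t₁, t₂′) + γ₂(t₁′, t₂)`
for bilinear maps `γ₁ : T₁ × T₂ → T₃`, `γ₂ : T₁ × T₂ → T₃`; and in that case the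
curvature `R((t₁′,t₂′),(t₁″,t₂″)) = Γ_{t₁′,t₂′}(t₁″+t₂″) − Γ_{t₁″,t₂″}(t₁′+t₂′)` equals
`(γ₁ − γ₂)(t₁′, t₂″) − (γ₁ − γ₂)(t₁″, t₂′)`, i.e. the associated pairing
`Υ : T₁ ⊗ T₂ → T₃` is `γ₁ − γ₂`. -/
theorem natural_structure_trivial_biextension
    (T₁ T₂ T₃ : Type) [AddCommGroup T₁] [Module ℂ T₁] [AddCommGroup T₂] [Module ℂ T₂]
    [AddCommGroup T₃] [Module ℂ T₃]
    (Γ : T₁ → T₂ → (T₁ × T₂ →ₗ[ℂ] T₃)) :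
    -- (i) the ♮-compatibility criterion
    (((∀ t₁ s₁ t₂ v₁ w₁ v₂,
        Γ (t₁ + s₁) t₂ (v₁ + w₁, v₂) = Γ t₁ t₂ (v₁, v₂) + Γ s₁ t₂ (w₁, v₂)) ∧
      (∀ t₁ t₂ s₂ v₁ v₂ w₂,
        Γ t₁ (t₂ + s₂) (v₁, v₂ + w₂) = Γ t₁ t₂ (v₁, v₂) + Γ t₁ s₂ (v₁, w₂)))
      ↔
      (∃ (γ₁ : T₁ → (T₂ →ₗ[ℂ] T₃)) (γ₂ : T₂ → (T₁ →ₗ[ℂ] T₃)),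
        (∀ a b : T₁, γ₁ (a + b) = γ₁ a + γ₁ b) ∧
        (∀ a b : T₂, γ₂ (a + b) = γ₂ a + γ₂ b) ∧
        (∀ t₁ t₂ v₁ v₂, Γ t₁ t₂ (v₁, v₂) = γ₁ t₁ v₂ + γ₂ t₂ v₁))) ∧
    -- (ii) the curvature of such a ♮-structure is Υ = γ₁ − γ₂
    (∀ (γ₁ : T₁ → (T₂ →ₗ[ℂ] T₃)) (γ₂ : T₂ → (T₁ →ₗ[ℂ] T₃)),
      (∀ a b : T₁, γ₁ (a + b) = γ₁ a + γ₁ b) →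
      (∀ a b : T₂, γ₂ (a + b) = γ₂ a + γ₂ b) →
      (∀ t₁ t₂ v₁ v₂, Γ t₁ t₂ (v₁, v₂) = γ₁ t₁ v₂ + γ₂ t₂ v₁) →
      ∀ t₁' t₂' t₁'' t₂'',
        Γ t₁' t₂' (t₁'', t₂'') - Γ t₁'' t₂'' (t₁', t₂')
          = (γ₁ t₁' t₂'' - γ₂ t₂'' t₁') - (γ₁ t₁'' t₂' - γ₂ t₂' t₁'')) := by
  refine ⟨⟨fun ⟨h₁, h₂⟩ => exists_split_of_isHorizontal h₁ h₂, ?_⟩, ?_⟩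
  · rintro ⟨γ₁, γ₂, hγ₁, hγ₂, hΓ⟩
    exact ⟨isHorizontalFst_of_split hγ₁ hΓ, isHorizontalSnd_of_split hγ₂ hΓ⟩
  · intro γ₁ γ₂ _ _ hΓ t₁' t₂' t₁'' t₂''
    rw [hΓ, hΓ]
    abel
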